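/- For the unit-speed hyperbolic geodesic z_{β,a}(t) = e^{iβ}((2+ia)τ(t) + ia)/(iaτ(t) - 2 + ia) with τ(t) = tanh(t/2), the backward endpoint is lim_{t→-∞} z_{β,a}(t) = e^{iβ} and the forward endpoint is lim_{t→+∞} z_{β,a}(t) = e^{i(β+π+2 arctan a)}. -/

import Mathlib

open Complex Filter

/-- The unit-speed geodesic `z_{β,a}(t) = e^{iβ}((2+ia)τ(t)+ia)/(iaτ(t)-2+ia)`,
`τ(t) = tanh(t/2)`, of the Poincaré disk. -/
noncomputable def zgeo (β a t : ℝ) : ℂ :=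
  Complex.exp (Complex.I * β) *
    (((2 + Complex.I * a) * (Real.tanh (t / 2) : ℂ) + Complex.I * a) /
      (Complex.I * a * (Real.tanh (t / 2) : ℂ) - 2 + Complex.I * a))


lemma tanh_eq_aux (x : ℝ) : Real.tanh x = (1 - Real.exp (-(2*x))) / (1 + Real.exp (-(2*x))) := by
  rw [Real.tanh_eq_sinh_div_cosh, Real.sinh_eq, Real.cosh_eq]
  have h1 : 1 + Real.exp (-(2*x)) = Real.exp (-x) * (Real.exp x + Real.exp (-x)) := by
    rw [mul_add, ← Real.exp_add, ← Real.exp_add]; ring_nf; rw [Real.exp_zero]; ring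
  have h2 : 1 - Real.exp (-(2*x)) = Real.exp (-x) * (Real.exp x - Real.exp (-x)) := by
    rw [mul_sub, ← Real.exp_add, ← Real.exp_add]; ring_nf; rw [Real.exp_zero]; ring
  have he := Real.exp_ne_zero (-x)
  rw [h1, h2, mul_div_mul_left _ _ he]
  field_simp

lemma tanh_atTop : Tendsto Real.tanh atTop (nhds 1) := by
  have hu : Tendsto (fun x : ℝ => Real.exp (-(2*x))) atTop (nhds 0) := by
    apply Real.tendsto_exp_atBot.comp
    have : Tendsto (fun x : ℝ => 2*x) atTop atTop :=
      (tendsto_const_mul_atTop_of_pos two_pos).2 tendsto_id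
    exact tendsto_neg_atTop_atBot.comp this
  have h1 : Tendsto (fun x : ℝ => 1 - Real.exp (-(2*x))) atTop (nhds (1 - 0)) :=
    tendsto_const_nhds.sub hu
  have h2 : Tendsto (fun x : ℝ => 1 + Real.exp (-(2*x))) atTop (nhds (1 + 0)) :=
    tendsto_const_nhds.add hu
  have := h1.div h2 (by norm_num)
  rw [show ((1:ℝ)-0)/(1+0) = 1 by norm_num] at this
  refine this.congr fun x => ?_
  simp [Pi.div_apply, tanh_eq_aux]

lemma tanh_atBot : Tendsto Real.tanh atBot (nhds (-1)) := by
  have := (tanh_atTop.comp tendsto_neg_atBot_atTop).neg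
  simpa [Real.tanh_neg, Function.comp] using this

lemma exp_arctan_key (a : ℝ) :
    Complex.exp (Complex.I * (Real.pi + 2 * Real.arctan a)) =
      ((2 + Complex.I * a) + Complex.I * a) / (Complex.I * a - 2 + Complex.I * a) := by
  have hs : Real.sqrt (1 + a^2) ^ 2 = 1 + a^2 := Real.sq_sqrt (by positivity)
  have hs0 : Real.sqrt (1 + a^2) ≠ 0 := by positivity
  have hc : Real.cos (2 * Real.arctan a) = (1 - a^2)/(1 + a^2) := by
    rw [Real.cos_two_mul, Real.cos_arctan]
    field_simp
    nlinarith [hs]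
  have hsin : Real.sin (2 * Real.arctan a) = 2*a/(1 + a^2) := by
    rw [Real.sin_two_mul, Real.sin_arctan, Real.cos_arctan]
    field_simp
    rw [hs]
  have h1 : Complex.exp (Complex.I * (Real.pi + 2 * Real.arctan a)) =
      -((Real.cos (2 * Real.arctan a) : ℂ) + (Real.sin (2 * Real.arctan a) : ℂ) * Complex.I) := by
    rw [show Complex.I * ((Real.pi:ℂ) + 2 * Real.arctan a)
        = (Real.pi:ℂ) * Complex.I + ((2 * Real.arctan a : ℝ) : ℂ) * Complex.I by push_cast; ring,
      Complex.exp_add, Complex.exp_pi_mul_I, Complex.exp_mul_I,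
      ← Complex.ofReal_cos, ← Complex.ofReal_sin]
    ring
  rw [h1, hc, hsin]
  have hden : Complex.I * a - 2 + Complex.I * a ≠ 0 := by
    intro h
    have := congrArg Complex.re h
    simp [Complex.add_re, Complex.sub_re] at this
  have ha0 : (1 + (a:ℂ)^2) ≠ 0 := by
    intro h
    have h2 : ((1 + a^2 : ℝ) : ℂ) = 0 := by push_cast; exact h
    have h3 : (1 + a^2 : ℝ) = 0 := by exact_mod_cast h2
    nlinarith [sq_nonneg a]
  rw [eq_div_iff hden]
  push_cast
  field_simp
  ring_nf
  simp [Complex.I_sq]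
  ring

lemma zgeo_lim (β a : ℝ) {l : Filter ℝ} {τ₀ : ℂ}
    (ht : Tendsto (fun t : ℝ => (Real.tanh (t/2) : ℂ)) l (nhds τ₀))
    (hden : Complex.I * a * τ₀ - 2 + Complex.I * a ≠ 0) :
    Tendsto (zgeo β a) l (nhds (Complex.exp (Complex.I * β) *
      (((2 + Complex.I * a) * τ₀ + Complex.I * a) /
        (Complex.I * a * τ₀ - 2 + Complex.I * a)))) := by
  unfold zgeo
  apply tendsto_const_nhds.mul
  exact ((tendsto_const_nhds.mul ht).add tendsto_const_nhds).div
    (((tendsto_const_nhds.mul ht).sub tendsto_const_nhds).add tendsto_const_nhds) hden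

/-- The backward endpoint of `z_{β,a}` is `e^{iβ}` and the forward endpoint is
`e^{i(β+π+2 arctan a)}`. -/
theorem stmt2 (β a : ℝ) :
    Tendsto (zgeo β a) atBot (nhds (Complex.exp (Complex.I * β))) ∧
    Tendsto (zgeo β a) atTop
      (nhds (Complex.exp (Complex.I * (β + Real.pi + 2 * Real.arctan a)))) := by
  constructor
  · have hdiv : Tendsto (fun t : ℝ => t/2) atBot atBot :=
      tendsto_div_const_atBot_of_pos two_pos |>.2 tendsto_id
    have ht : Tendsto (fun t : ℝ => (Real.tanh (t/2) : ℂ)) atBot (nhds (-1 : ℂ)) := by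
      have := Complex.continuous_ofReal.continuousAt.tendsto.comp (tanh_atBot.comp hdiv)
      convert this using 2; try norm_num
      simp
    have hden : Complex.I * a * (-1 : ℂ) - 2 + Complex.I * a ≠ 0 := by
      intro h
      have := congrArg Complex.re h
      simp at this
    have hlim := zgeo_lim β a ht hden
    have hv : ((2 + Complex.I * a) * (-1:ℂ) + Complex.I * a) /
        (Complex.I * a * (-1:ℂ) - 2 + Complex.I * a) = 1 := by
      rw [show (2 + Complex.I * (a:ℂ)) * (-1) + Complex.I * a = -2 by ring,
        show Complex.I * (a:ℂ) * (-1) - 2 + Complex.I * a = -2 by ring]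
      norm_num
    rwa [hv, mul_one] at hlim
  · have hdiv : Tendsto (fun t : ℝ => t/2) atTop atTop :=
      tendsto_div_const_atTop_of_pos two_pos |>.2 tendsto_id
    have ht : Tendsto (fun t : ℝ => (Real.tanh (t/2) : ℂ)) atTop (nhds (1 : ℂ)) := by
      have := Complex.continuous_ofReal.continuousAt.tendsto.comp (tanh_atTop.comp hdiv)
      convert this using 2; try norm_num
      simp
    have hden : Complex.I * a * (1 : ℂ) - 2 + Complex.I * a ≠ 0 := by
      intro h
      have := congrArg Complex.re h
      simp at this
    have hlim := zgeo_lim β a ht hden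
    have hv : Complex.exp (Complex.I * β) *
        (((2 + Complex.I * a) * (1:ℂ) + Complex.I * a) /
          (Complex.I * a * (1:ℂ) - 2 + Complex.I * a)) =
        Complex.exp (Complex.I * (β + Real.pi + 2 * Real.arctan a)) := by
      rw [show Complex.I * ((β : ℂ) + Real.pi + 2 * Real.arctan a)
          = Complex.I * β + Complex.I * ((Real.pi : ℂ) + 2 * Real.arctan a) by ring,
        Complex.exp_add, exp_arctan_key]
      ring_nf
    rwa [hv] at hlim
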